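/- Let p be a monic polynomial of degree n with real coefficients and let 0 < α < 1. Then the maximum of |p(x)| over x in [-α, α] is at least α^n / 2^(n-1). -/

import Mathlib

/-!
Rescaling `x ↦ α x` and dividing by the maximum `M` of `|p|` on `[-α, α]` turns `p` into a
polynomial bounded by `1` on `[-1, 1]` with leading coefficient `α ^ n / M`. By the extremal
property of the Chebyshev polynomial `T n`, that leading coefficient is at most `2 ^ (n - 1)`.
-/

open Polynomial Set

namespace Polynomial.Chebyshev

theorem coeff_mul_pow_le_of_forall_abs_le {n : ℕ} {P : ℝ[X]} {α M : ℝ} (hα : 0 < α)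
    (hPdeg : P.degree ≤ n) (hPbnd : ∀ x ∈ Icc (-α) α, |P.eval x| ≤ M) :
    α ^ n * P.coeff n ≤ 2 ^ (n - 1) * M := by
  have hM : 0 ≤ M := (abs_nonneg _).trans (hPbnd 0 ⟨by linarith, hα.le⟩)
  rcases hM.eq_or_lt with rfl | hM
  · suffices P = 0 by simp [this]
    refine eq_zero_of_infinite_isRoot P ((Icc_infinite (by linarith : -α < α)).mono fun x hx ↦ ?_)
    exact abs_nonpos_iff.mp (hPbnd x hx)
  set Q : ℝ[X] := M⁻¹ • P.comp (Polynomial.C α * X)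
  have hQdeg : Q.degree ≤ n := by
    refine degree_le_iff_coeff_zero _ _ |>.mpr fun m hm ↦ ?_
    simp [Q, coeff_eq_zero_of_degree_lt (hPdeg.trans_lt hm)]
  have hQbnd : ∀ y ∈ Icc (-1) 1, |Q.eval y| ≤ 1 := by
    intro y ⟨hy₁, hy₂⟩
    have hαy : α * y ∈ Icc (-α) α := ⟨by nlinarith, by nlinarith⟩
    simp only [Q, eval_smul, eval_comp, eval_mul, eval_C, eval_X, smul_eq_mul, abs_mul,
      abs_inv, abs_of_pos hM]
    rw [inv_mul_le_iff₀ hM, mul_one]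
    exact hPbnd _ hαy
  have hQcoeff := coeff_le_of_forall_abs_le_one hQdeg hQbnd
  simp only [Q, coeff_smul, comp_C_mul_X_coeff, smul_eq_mul] at hQcoeff
  rw [inv_mul_le_iff₀ hM] at hQcoeff
  linarith

end Polynomial.Chebyshev

theorem stmt_1_general (n : ℕ) (p : Polynomial ℝ) (hmonic : p.Monic) (hdeg : p.natDegree = n)
    (α : ℝ) (hα0 : 0 < α) :
    ∃ x ∈ Set.Icc (-α) α, α ^ n / 2 ^ (n - 1) ≤ |p.eval x| := by
  obtain ⟨x, hx, hmax⟩ := (isCompact_Icc (a := -α) (b := α)).exists_isMaxOn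
    (nonempty_Icc.mpr (by linarith)) p.continuous.abs.continuousOn
  have hbound := Chebyshev.coeff_mul_pow_le_of_forall_abs_le hα0
    (hdeg ▸ p.degree_le_natDegree) fun y hy ↦ hmax hy
  rw [← hdeg, ← leadingCoeff, hmonic.leadingCoeff, hdeg, mul_one] at hbound
  exact ⟨x, hx, div_le_of_le_mul₀ (by positivity) (abs_nonneg _) (by linarith)⟩

/-- Scaled Chebyshev minimax bound: a monic real polynomial of degree `n` attains absolute
value at least `α^n / 2^(n-1)` somewhere on `[-α, α]`, for `0 < α < 1`. -/
theorem stmt_1 (n : ℕ) (p : Polynomial ℝ) (hmonic : p.Monic) (hdeg : p.natDegree = n)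
    (α : ℝ) (hα0 : 0 < α) (hα1 : α < 1) :
    ∃ x ∈ Set.Icc (-α) α, α ^ n / 2 ^ (n - 1) ≤ |p.eval x| :=
  stmt_1_general n p hmonic hdeg α hα0
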